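/- arXiv:1408.6939 — 4 statements merged into one kernel-verified Lean document; each statement's English description precedes it below -/
import Mathlib

section
/- If A ⊆ R^+ is triangular, then every path for A is a Dyck path for A; that is, for any sequence (α_{i_1,j_1}, …, α_{i_s,j_s}) of elements of A with i_1 ≤ ⋯ ≤ i_s, j_1 ≤ ⋯ ≤ j_s, and i_{k+1} ≤ j_k + 1 for all k, one has α_{i_k, j_ℓ} ∈ A for all k, ℓ with i_k ≤ j_ℓ. -/
def IsTriangularSet (A : Set (ℕ × ℕ)) : Prop :=
  ∀ i₁ j₁ i₂ j₂ : ℕ, (i₁, j₁) ∈ A → (i₂, j₂) ∈ A → i₁ ≤ i₂ → j₁ ≤ j₂ →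
    i₂ ≤ j₁ + 1 →
    (i₁, j₂) ∈ A ∧ (i₂ ≤ j₁ → (i₂, j₁) ∈ A)

/-- If `A` is triangular then every path for `A` (a weakly increasing sequence
`(α_{i₁,j₁}, …, α_{i_s,j_s})` of elements of `A` with `i_{k+1} ≤ j_k + 1`) is a
Dyck path for `A`: all rectangle completions `(i_k, j_ℓ)` with `i_k ≤ j_ℓ` lie in `A`. -/
theorem stmt9 (A : Set (ℕ × ℕ)) (htri : IsTriangularSet A)
    (s : ℕ) (r : ℕ → ℕ × ℕ)
    (hmem : ∀ k < s, r k ∈ A)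
    (hmono1 : ∀ k, k + 1 < s → (r k).1 ≤ (r (k + 1)).1)
    (hmono2 : ∀ k, k + 1 < s → (r k).2 ≤ (r (k + 1)).2)
    (hadj : ∀ k, k + 1 < s → (r (k + 1)).1 ≤ (r k).2 + 1) :
    ∀ k < s, ∀ l < s, (r k).1 ≤ (r l).2 → ((r k).1, (r l).2) ∈ A := by
  -- global monotonicity
  have mono1 : ∀ a b, a ≤ b → b < s → (r a).1 ≤ (r b).1 := by
    intro a b hab hbs
    induction b with
    | zero =>
      have : a = 0 := by omega
      simp [this]
    | succ n ih =>
      rcases Nat.lt_or_ge a (n+1) with h | h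
      · exact le_trans (ih (by omega) (by omega)) (hmono1 n hbs)
      · have : a = n + 1 := by omega
        simp [this]
  have mono2 : ∀ a b, a ≤ b → b < s → (r a).2 ≤ (r b).2 := by
    intro a b hab hbs
    induction b with
    | zero =>
      have : a = 0 := by omega
      simp [this]
    | succ n ih =>
      rcases Nat.lt_or_ge a (n+1) with h | h
      · exact le_trans (ih (by omega) (by omega)) (hmono2 n hbs)
      · have : a = n + 1 := by omega
        simp [this]
  -- forward case: k ≤ l, by induction on the gap
  have fwd : ∀ d k, k + d < s → (r k).1 ≤ (r (k + d)).2 →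
      ((r k).1, (r (k + d)).2) ∈ A := by
    intro d
    induction d with
    | zero =>
      intro k hk _
      simpa using hmem k hk
    | succ n ih =>
      intro k hk hle
      have hkn : k + n < s := by omega
      have hadj' := hadj (k + n) (by omega : k + n + 1 < s)
      rcases Nat.lt_or_ge ((r (k + n)).2) ((r k).1) with h | h
      · -- i_k > j_{k+n}, forces equality with r (k+n+1)
        have h1 : (r k).1 ≤ (r (k + n + 1)).1 := mono1 k (k + n + 1) (by omega) (by omega)
        have h2 : (r k).1 = (r (k + n + 1)).1 := by omega
        have : r (k + n + 1) ∈ A := hmem _ (by omega)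
        have heq : ((r k).1, (r (k + n + 1)).2) = r (k + n + 1) := by
          rw [h2]
        rw [show k + (n + 1) = k + n + 1 from rfl, heq]
        exact this
      · have hih : ((r k).1, (r (k + n)).2) ∈ A := ih k hkn h
        have hmemA : ((r (k + n + 1)).1, (r (k + n + 1)).2) ∈ A := by
          simpa using hmem _ (show k + n + 1 < s by omega)
        have := htri (r k).1 ((r (k + n)).2) ((r (k + n + 1)).1) ((r (k + n + 1)).2)
          hih hmemA
          (le_trans (mono1 k (k + n) (by omega) hkn) (hmono1 (k + n) (by omega)))
          (hmono2 (k + n) (by omega)) hadj'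
        rw [show k + (n + 1) = k + n + 1 from rfl]
        exact this.1
  intro k hk l hl hle
  rcases Nat.le_total k l with h | h
  · obtain ⟨d, rfl⟩ := Nat.exists_eq_add_of_le h
    exact fwd d k hl hle
  · -- l ≤ k : use second triangular conclusion
    have hlA : ((r l).1, (r l).2) ∈ A := by simpa using hmem l hl
    have hkA : ((r k).1, (r k).2) ∈ A := by simpa using hmem k hk
    have := htri (r l).1 (r l).2 (r k).1 (r k).2 hlA hkA
      (mono1 l k h hk) (mono2 l k h hk) (by omega)
    exact this.2 hle
end

section
/- If A ⊆ R^+ is triangular and λ, μ are dominant integral weights, then the lattice points satisfy the Minkowski sum property S_A(λ) + S_A(μ) = S_A(λ + μ); in particular P_A(λ) is a normal lattice polytope. -/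
/-- Positive roots of `sl_{n+1}` as pairs `(i,j)`, `1 ≤ i ≤ j ≤ n`. -/
def Rplus (n : ℕ) : Set (ℕ × ℕ) := {p | 1 ≤ p.1 ∧ p.1 ≤ p.2 ∧ p.2 ≤ n}

/-- For `λ = Σ m_i ω_i`: `λ(h_{a,b}) = m_a + ⋯ + m_b`, as a real number. -/
def lamSum (m : ℕ → ℕ) (a b : ℕ) : ℝ := ∑ t ∈ Finset.Icc a b, (m t : ℝ)

/-- `p 0, …, p (s-1)` is a Dyck path for the full root system `R^+`:
it starts and ends at simple roots and each step is `(i,j) → (i+1,j)` or `(i,j) → (i,j+1)`. -/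
def IsDyck (n s : ℕ) (p : ℕ → ℕ × ℕ) : Prop :=
  1 ≤ s ∧ (∀ k < s, p k ∈ Rplus n) ∧
  (p 0).1 = (p 0).2 ∧ (p (s - 1)).1 = (p (s - 1)).2 ∧
  ∀ k, k + 1 < s → (p (k + 1) = ((p k).1 + 1, (p k).2) ∨ p (k + 1) = ((p k).1, (p k).2 + 1))

/-- The Feigin–Fourier–Littelmann polytope `P(λ)`, realized as functions on `ℕ × ℕ`
supported on `R^+`: nonnegative, and for each Dyck path `p` with base root
`β_p = (i₁, j_s)`, `Σ_{α ∈ p} x_α ≤ λ(h_{β_p})`. -/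
def Ppoly (n : ℕ) (m : ℕ → ℕ) : Set (ℕ × ℕ → ℝ) :=
  {x | (∀ q, 0 ≤ x q) ∧ (∀ q, q ∉ Rplus n → x q = 0) ∧
    ∀ s p, IsDyck n s p →
      ∑ k ∈ Finset.range s, x (p k) ≤ lamSum m (p 0).1 (p (s - 1)).2}

/-- `p 0, …, p (s-1)` is a Dyck path for `A`: a path in `A` (weakly increasing in
both coordinates, consecutive supports connected, no repetitions) such that all
rectangle completions `(i_k, j_ℓ)` with `i_k ≤ j_ℓ` lie in `A`. -/
def IsDyckA (A : Set (ℕ × ℕ)) (s : ℕ) (p : ℕ → ℕ × ℕ) : Prop :=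
  1 ≤ s ∧ (∀ k < s, p k ∈ A) ∧
  (∀ k, k + 1 < s → (p k).1 ≤ (p (k + 1)).1 ∧ (p k).2 ≤ (p (k + 1)).2 ∧
    p k ≠ p (k + 1) ∧ (p (k + 1)).1 ≤ (p k).2 + 1) ∧
  (∀ k < s, ∀ l < s, (p k).1 ≤ (p l).2 → ((p k).1, (p l).2) ∈ A)

/-- The face polytope `P_A(λ)`, realized as functions on `ℕ × ℕ` supported on `A`,
cut out by the inequalities over Dyck paths for `A`. -/
def PpolyA (n : ℕ) (m : ℕ → ℕ) (A : Set (ℕ × ℕ)) : Set (ℕ × ℕ → ℝ) :=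
  {x | (∀ q, 0 ≤ x q) ∧ (∀ q, q ∉ A → x q = 0) ∧
    ∀ s p, IsDyckA A s p →
      ∑ k ∈ Finset.range s, x (p k) ≤ lamSum m (p 0).1 (p (s - 1)).2}

/-- The lattice points `S(λ)` of `P(λ)`. -/
def Sfull (n : ℕ) (m : ℕ → ℕ) : Set (ℕ × ℕ → ℝ) :=
  {x ∈ Ppoly n m | ∀ q, ∃ c : ℕ, x q = c}

/-- The lattice points `S_A(λ)` of `P_A(λ)`. -/
def SA (n : ℕ) (m : ℕ → ℕ) (A : Set (ℕ × ℕ)) : Set (ℕ × ℕ → ℝ) :=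
  {x ∈ PpolyA n m A | ∀ q, ∃ c : ℕ, x q = c}

namespace FFLproof

lemma lamSum_nonneg (m : ℕ → ℕ) (a b : ℕ) : 0 ≤ lamSum m a b :=
  Finset.sum_nonneg fun t _ => by positivity

lemma lamSum_mono (m : ℕ → ℕ) {a a' b b' : ℕ} (ha : a' ≤ a) (hb : b ≤ b') :
    lamSum m a b ≤ lamSum m a' b' :=
  Finset.sum_le_sum_of_subset_of_nonneg
    (Finset.Icc_subset_Icc ha hb) (fun t _ _ => by positivity)

lemma lamSum_split (m : ℕ → ℕ) {a b c : ℕ} (hab : a ≤ b + 1) (hbc : b ≤ c) :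
    lamSum m a b + lamSum m (b + 1) c ≤ lamSum m a c := by
  have hdisj : Disjoint (Finset.Icc a b) (Finset.Icc (b + 1) c) := by
    simp only [Finset.disjoint_left, Finset.mem_Icc]
    rintro t ⟨_, h1⟩ ⟨h2, _⟩; omega
  rw [lamSum, lamSum, lamSum, ← Finset.sum_union hdisj]
  refine Finset.sum_le_sum_of_subset_of_nonneg ?_ (fun t _ _ => by positivity)
  intro t ht
  simp only [Finset.mem_union, Finset.mem_Icc] at ht ⊢
  omega

/-- A path: points in `Rplus n`, unit steps. -/
def IsPath (n s : ℕ) (p : ℕ → ℕ × ℕ) : Prop :=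
  (∀ k < s, p k ∈ Rplus n) ∧
  ∀ k, k + 1 < s → (p (k + 1) = ((p k).1 + 1, (p k).2) ∨ p (k + 1) = ((p k).1, (p k).2 + 1))

lemma path_mono {n s : ℕ} {p : ℕ → ℕ × ℕ} (hp : IsPath n s p) {k l : ℕ}
    (hkl : k ≤ l) (hl : l < s) : (p k).1 ≤ (p l).1 ∧ (p k).2 ≤ (p l).2 := by
  induction l with
  | zero => simp_all
  | succ l ih =>
    rcases Nat.lt_or_ge k (l + 1) with h | h
    · have hstep := hp.2 l hl
      have := ih (by omega) (by omega)
      rcases hstep with h' | h' <;> rw [h'] <;> constructor <;> simp <;> omega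
    · have : k = l + 1 := by omega
      subst this; exact ⟨le_rfl, le_rfl⟩

lemma path_tail {n s : ℕ} {p : ℕ → ℕ × ℕ} (hp : IsPath n s p) (hs : 1 ≤ s) :
    IsPath n (s - 1) (fun k => p (k + 1)) := by
  constructor
  · intro k hk; exact hp.1 (k + 1) (by omega)
  · intro k hk; exact hp.2 (k + 1) (by omega)

lemma dyckA_mono {A : Set (ℕ × ℕ)} {s : ℕ} {p : ℕ → ℕ × ℕ} (hp : IsDyckA A s p) {k l : ℕ}
    (hkl : k ≤ l) (hl : l < s) : (p k).1 ≤ (p l).1 ∧ (p k).2 ≤ (p l).2 := by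
  induction l with
  | zero => simp_all
  | succ l ih =>
    rcases Nat.lt_or_ge k (l + 1) with h | h
    · have hstep := hp.2.2.1 l hl
      have := ih (by omega) (by omega)
      exact ⟨le_trans this.1 hstep.1, le_trans this.2 hstep.2.1⟩
    · have : k = l + 1 := by omega
      subst this; exact ⟨le_rfl, le_rfl⟩

lemma dyckA_diag_strict {A : Set (ℕ × ℕ)} {s : ℕ} {p : ℕ → ℕ × ℕ} (hp : IsDyckA A s p)
    {k l : ℕ} (hkl : k < l) (hl : l < s) :
    (p k).1 + (p k).2 < (p l).1 + (p l).2 := by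
  induction l with
  | zero => omega
  | succ l ih =>
    have hstep := hp.2.2.1 l hl
    have hlt : (p l).1 + (p l).2 < (p (l + 1)).1 + (p (l + 1)).2 := by
      rcases Nat.lt_or_ge (p l).1 (p (l+1)).1 with h | h
      · omega
      · have h1 : (p l).1 = (p (l+1)).1 := le_antisymm hstep.1 h
        have h2 : (p l).2 ≠ (p (l+1)).2 := by
          intro hc; exact hstep.2.2.1 (Prod.ext h1 hc)
        have := hstep.2.1
        omega
    rcases Nat.lt_or_ge k l with h | h
    · exact lt_trans (ih h (by omega)) hlt
    · have : k = l := by omega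
      subst this; exact hlt

/-- Extending an `A`-Dyck path (run) by one more point, connected to its last point. -/
lemma extend_run {n : ℕ} {A : Set (ℕ × ℕ)} (hA : A ⊆ Rplus n) (htri : IsTriangularSet A)
    {u : ℕ} {r : ℕ → ℕ × ℕ} (hr : IsDyckA A u r) {q : ℕ × ℕ} (hq : q ∈ A)
    (h1 : (r (u - 1)).1 ≤ q.1) (h2 : (r (u - 1)).2 ≤ q.2)
    (h3 : (r (u - 1)).1 + (r (u - 1)).2 < q.1 + q.2)
    (hconn : q.1 ≤ (r (u - 1)).2 + 1) :
    IsDyckA A (u + 1) (fun k => if k < u then r k else q) := by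
  have hu : 1 ≤ u := hr.1
  refine ⟨by omega, ?_, ?_, ?_⟩
  · intro k hk
    by_cases hku : k < u
    · simpa [hku] using hr.2.1 k hku
    · simpa [hku] using hq
  · intro k hk
    have hk' : k < u := by omega
    by_cases hk1 : k + 1 < u
    · simpa only [if_pos hk', if_pos hk1] using hr.2.2.1 k hk1
    · have hkeq : k = u - 1 := by omega
      simp only [if_pos hk', if_neg hk1]
      subst hkeq
      refine ⟨h1, h2, ?_, hconn⟩
      intro hc; rw [hc] at h3; omega
  · intro k hk l hl hle
    by_cases hku : k < u <;> by_cases hlu : l < u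
    · simp only [if_pos hku, if_pos hlu] at hle ⊢
      exact hr.2.2.2 k hku l hlu hle
    · -- k < u, l = u
      simp only [if_pos hku, if_neg hlu] at hle ⊢
      have hmk := dyckA_mono hr (show k ≤ u - 1 by omega) (show u - 1 < u by omega)
      have hrk1 : (r k).1 ≤ (r (u - 1)).2 :=
        le_trans hmk.1 (hA (hr.2.1 (u - 1) (by omega))).2.1
      have hrect : ((r k).1, (r (u - 1)).2) ∈ A :=
        hr.2.2.2 k hku (u - 1) (by omega) hrk1
      exact (htri (r k).1 (r (u - 1)).2 q.1 q.2 hrect (by simpa using hq)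
        (le_trans hmk.1 h1) h2 hconn).1
    · -- k = u, l < u
      simp only [if_neg hku, if_pos hlu] at hle ⊢
      have hml := dyckA_mono hr (show l ≤ u - 1 by omega) (show u - 1 < u by omega)
      exact (htri (r l).1 (r l).2 q.1 q.2 (by simpa using hr.2.1 l hlu)
        (by simpa using hq) (le_trans hml.1 h1) (le_trans hml.2 h2)
        (by omega)).2 hle
    · simp only [if_neg hku, if_neg hlu] at hle ⊢
      simpa using hq

lemma sum_extend_run {u : ℕ} {r : ℕ → ℕ × ℕ} {q : ℕ × ℕ} (x : ℕ × ℕ → ℝ) :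
    ∑ k ∈ Finset.range (u + 1), x ((fun k => if k < u then r k else q) k)
      = (∑ k ∈ Finset.range u, x (r k)) + x q := by
  rw [Finset.sum_range_succ]
  congr 1
  · exact Finset.sum_congr rfl fun k hk => by
      simp [Finset.mem_range.mp hk]
  · simp

lemma path_step {n s : ℕ} {p : ℕ → ℕ × ℕ} (hp : IsPath n s p) {k : ℕ} (h : k + 1 < s) :
    (p k).1 ≤ (p (k + 1)).1 ∧ (p k).2 ≤ (p (k + 1)).2 ∧
      (p (k + 1)).1 + (p (k + 1)).2 = (p k).1 + (p k).2 + 1 := by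
  rcases hp.2 k h with h' | h' <;> rw [h'] <;> refine ⟨by simp, by simp, by simp; omega⟩

lemma singleton_dyckA {A : Set (ℕ × ℕ)} {q : ℕ × ℕ} (hq : q ∈ A) :
    IsDyckA A 1 (fun _ => q) :=
  ⟨le_rfl, fun k _ => hq, fun k hk => by omega, fun k _ l _ _ => by simpa using hq⟩

lemma key {n : ℕ} (m : ℕ → ℕ) {A : Set (ℕ × ℕ)} (hA : A ⊆ Rplus n)
    (htri : IsTriangularSet A) {x : ℕ × ℕ → ℝ}
    (hx0 : ∀ q, 0 ≤ x q) (hxs : ∀ q, q ∉ A → x q = 0)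
    (hxi : ∀ s p, IsDyckA A s p →
      ∑ k ∈ Finset.range s, x (p k) ≤ lamSum m (p 0).1 (p (s - 1)).2) :
    ∀ s : ℕ, ∀ p : ℕ → ℕ × ℕ, IsPath n s p → 1 ≤ s →
      ((∀ c, c ≤ (p 0).1 →
          ∑ k ∈ Finset.range s, x (p k) ≤ lamSum m c (p (s - 1)).2) ∧
       (∀ u r, IsDyckA A u r → (r (u - 1)).1 ≤ (p 0).1 → (r (u - 1)).2 ≤ (p 0).2 →
          (r (u - 1)).1 + (r (u - 1)).2 < (p 0).1 + (p 0).2 →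
          (∑ k ∈ Finset.range u, x (r k)) + ∑ k ∈ Finset.range s, x (p k) ≤
            lamSum m (r 0).1 (p (s - 1)).2)) := by
  intro s
  induction s using Nat.strong_induction_on with
  | _ s IH =>
  intro p hp hs
  rcases Nat.lt_or_ge s 2 with hs2 | hs2
  · -- s = 1
    have hs1 : s = 1 := by omega
    subst hs1
    simp only [show (1 : ℕ) - 1 = 0 from rfl]
    have hB1 : ∀ c, c ≤ (p 0).1 →
        ∑ k ∈ Finset.range 1, x (p k) ≤ lamSum m c (p 0).2 := by
      intro c hc
      rw [Finset.sum_range_one]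
      by_cases hmem : p 0 ∈ A
      · have hone := hxi 1 (fun _ => p 0) (singleton_dyckA hmem)
        beta_reduce at hone
        rw [Finset.sum_range_one] at hone
        exact le_trans hone (lamSum_mono m hc le_rfl)
      · rw [hxs _ hmem]; exact lamSum_nonneg m _ _
    refine ⟨hB1, ?_⟩
    intro u r hr h1 h2 h3
    have hu : 1 ≤ u := hr.1
    rw [Finset.sum_range_one]
    by_cases hmem : p 0 ∈ A
    · by_cases hconn : (p 0).1 ≤ (r (u - 1)).2 + 1
      · -- extend and close
        have hext := extend_run hA htri hr hmem h1 h2 h3 hconn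
        have hone := hxi (u + 1) (fun k => if k < u then r k else p 0) hext
        beta_reduce at hone
        rw [Nat.add_sub_cancel, if_pos (show 0 < u by omega),
          if_neg (lt_irrefl u), sum_extend_run x] at hone
        exact hone
      · -- close run, bound the single point separately
        have hclose := hxi u r hr
        have hpt : x (p 0) ≤ lamSum m ((r (u - 1)).2 + 1) (p 0).2 := by
          have hone := hxi 1 (fun _ => p 0) (singleton_dyckA hmem)
          beta_reduce at hone
          rw [Finset.sum_range_one] at hone
          exact le_trans hone (lamSum_mono m (by omega) le_rfl)
        have h0u := dyckA_mono hr (Nat.zero_le (u - 1)) (show u - 1 < u by omega)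
        have hR := hA (hr.2.1 0 (by omega))
        have hsplit := lamSum_split m
          (show (r 0).1 ≤ (r (u - 1)).2 + 1 by
            have : (r 0).1 ≤ (r 0).2 := hR.2.1
            omega) h2
        calc (∑ k ∈ Finset.range u, x (r k)) + x (p 0)
            ≤ lamSum m (r 0).1 (r (u - 1)).2 + lamSum m ((r (u - 1)).2 + 1) (p 0).2 :=
              add_le_add hclose hpt
          _ ≤ lamSum m (r 0).1 (p 0).2 := hsplit
    · rw [hxs _ hmem, add_zero]
      exact le_trans (hxi u r hr) (lamSum_mono m le_rfl h2)
  · -- s = t + 2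
    obtain ⟨t, rfl⟩ : ∃ t, s = t + 2 := ⟨s - 2, by omega⟩
    simp only [show t + 2 - 1 = t + 1 from rfl]
    have hq : IsPath n (t + 1) (fun k => p (k + 1)) :=
      ⟨fun k hk => hp.1 (k + 1) (by omega), fun k hk => hp.2 (k + 1) (by omega)⟩
    have hIH := IH (t + 1) (by omega) (fun k => p (k + 1)) hq (by omega)
    beta_reduce at hIH
    simp only [Nat.add_sub_cancel, Nat.zero_add] at hIH
    have hstep01 := path_step hp (show 0 + 1 < t + 2 by omega)
    simp only [Nat.zero_add] at hstep01
    have hsum : ∑ k ∈ Finset.range (t + 2), x (p k)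
        = (∑ k ∈ Finset.range (t + 1), x (p (k + 1))) + x (p 0) :=
      Finset.sum_range_succ' (fun k => x (p k)) (t + 1)
    have hmono0 := path_mono hp (Nat.zero_le (t + 1)) (show t + 1 < t + 2 by omega)
    have hB1 : ∀ c, c ≤ (p 0).1 →
        ∑ k ∈ Finset.range (t + 2), x (p k) ≤ lamSum m c (p (t + 1)).2 := by
      intro c hc
      by_cases hmem : p 0 ∈ A
      · have hC := hIH.2 1 (fun _ => p 0) (singleton_dyckA hmem)
          (by beta_reduce; exact hstep01.1) (by beta_reduce; exact hstep01.2.1)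
          (by beta_reduce; omega)
        beta_reduce at hC
        rw [Finset.sum_range_one] at hC
        rw [hsum]
        calc (∑ k ∈ Finset.range (t + 1), x (p (k + 1))) + x (p 0)
            = x (p 0) + ∑ k ∈ Finset.range (t + 1), x (p (k + 1)) := by ring
          _ ≤ lamSum m (p 0).1 (p (t + 1)).2 := hC
          _ ≤ lamSum m c (p (t + 1)).2 := lamSum_mono m hc le_rfl
      · rw [hsum, hxs _ hmem, add_zero]
        exact hIH.1 c (le_trans hc hstep01.1)
    refine ⟨hB1, ?_⟩
    intro u r hr h1 h2 h3
    have hu : 1 ≤ u := hr.1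
    by_cases hmem : p 0 ∈ A
    · by_cases hconn : (p 0).1 ≤ (r (u - 1)).2 + 1
      · -- extend the run
        have hext := extend_run hA htri hr hmem h1 h2 h3 hconn
        have hC := hIH.2 (u + 1) (fun k => if k < u then r k else p 0) hext
          (by beta_reduce
              rw [Nat.add_sub_cancel, if_neg (lt_irrefl u)]
              exact hstep01.1)
          (by beta_reduce
              rw [Nat.add_sub_cancel, if_neg (lt_irrefl u)]
              exact hstep01.2.1)
          (by beta_reduce
              rw [Nat.add_sub_cancel, if_neg (lt_irrefl u)]
              omega)
        beta_reduce at hC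
        rw [if_pos (show 0 < u by omega), sum_extend_run x] at hC
        rw [hsum]
        calc (∑ k ∈ Finset.range u, x (r k)) +
              ((∑ k ∈ Finset.range (t + 1), x (p (k + 1))) + x (p 0))
            = ((∑ k ∈ Finset.range u, x (r k)) + x (p 0)) +
              ∑ k ∈ Finset.range (t + 1), x (p (k + 1)) := by ring
          _ ≤ lamSum m (r 0).1 (p (t + 1)).2 := hC
      · -- break: close the run, restart on the whole path
        have hclose := hxi u r hr
        have hrest := hB1 ((r (u - 1)).2 + 1) (by omega)
        have h0u := dyckA_mono hr (Nat.zero_le (u - 1)) (show u - 1 < u by omega)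
        have hR := hA (hr.2.1 0 (by omega))
        have hsplit := lamSum_split m
          (show (r 0).1 ≤ (r (u - 1)).2 + 1 by
            have : (r 0).1 ≤ (r 0).2 := hR.2.1
            omega)
          (show (r (u - 1)).2 ≤ (p (t + 1)).2 from le_trans h2 hmono0.2)
        calc (∑ k ∈ Finset.range u, x (r k)) + ∑ k ∈ Finset.range (t + 2), x (p k)
            ≤ lamSum m (r 0).1 (r (u - 1)).2 +
              lamSum m ((r (u - 1)).2 + 1) (p (t + 1)).2 := add_le_add hclose hrest
          _ ≤ lamSum m (r 0).1 (p (t + 1)).2 := hsplit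
    · -- p 0 ∉ A: keep the run
      have hC := hIH.2 u r hr (le_trans h1 hstep01.1) (le_trans h2 hstep01.2.1)
        (by omega)
      rw [hsum, hxs _ hmem]
      calc (∑ k ∈ Finset.range u, x (r k)) +
            ((∑ k ∈ Finset.range (t + 1), x (p (k + 1))) + 0)
          = (∑ k ∈ Finset.range u, x (r k)) +
            ∑ k ∈ Finset.range (t + 1), x (p (k + 1)) := by ring
        _ ≤ lamSum m (r 0).1 (p (t + 1)).2 := hC

/-- Any `A`-Dyck path inequality follows from the full Dyck path inequalities,
for nonnegative `x` (supported anywhere). -/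
lemma dyckA_sum_le {n : ℕ} {m : ℕ → ℕ} {A : Set (ℕ × ℕ)} (hA : A ⊆ Rplus n)
    {x : ℕ × ℕ → ℝ} (hx : x ∈ Ppoly n m) {s : ℕ} {p : ℕ → ℕ × ℕ}
    (hp : IsDyckA A s p) :
    ∑ k ∈ Finset.range s, x (p k) ≤ lamSum m (p 0).1 (p (s - 1)).2 := by
  obtain ⟨hx0, hxsupp, hxi⟩ := hx
  have hs : 1 ≤ s := hp.1
  -- bounds for points of p
  have hpb : ∀ k < s, (p 0).1 ≤ (p k).1 ∧ 1 ≤ (p k).1 ∧ (p k).1 ≤ (p k).2 ∧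
      (p k).2 ≤ (p (s - 1)).2 ∧ (p k).2 ≤ n := by
    intro k hk
    have hR := hA (hp.2.1 k hk)
    have h1 := dyckA_mono hp (Nat.zero_le k) hk
    have h2 := dyckA_mono hp (show k ≤ s - 1 by omega) (show s - 1 < s by omega)
    exact ⟨h1.1, hR.1, hR.2.1, h2.2, hR.2.2⟩
  have hpR := hA (hp.2.1 0 (by omega))
  have hpRe := hA (hp.2.1 (s - 1) (by omega))
  have hij : (p 0).1 ≤ (p (s - 1)).2 := by
    have := dyckA_mono hp (Nat.zero_le (s - 1)) (show s - 1 < s by omega)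
    have := hpR.2.1
    omega
  set i0 := (p 0).1 with hi0
  set je := (p (s - 1)).2 with hje
  have hi01 : 1 ≤ i0 := hpR.1
  have hi02 : i0 ≤ (p 0).2 := hpR.2.1
  have hjen : je ≤ n := hpRe.2.2
  have hm0e : i0 ≤ (p (s - 1)).1 := (dyckA_mono hp (Nat.zero_le (s - 1)) (by omega)).1
  have hjege : (p (s - 1)).1 ≤ je := hpRe.2.1
  clear_value i0 je
  -- extended point list
  set e : ℕ → ℕ × ℕ :=
    fun k => if k = 0 then (i0, i0) else if k ≤ s then p (k - 1) else (je, je) with he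
  have he0 : e 0 = (i0, i0) := by simp [he]
  have heS : e (s + 1) = (je, je) := by
    simp [he, show ¬ s + 1 ≤ s by omega]
  have hep : ∀ k < s, e (k + 1) = p k := by
    intro k hk
    simp [he, show k + 1 ≤ s by omega]
  have heb : ∀ k, 1 ≤ (e k).1 ∧ i0 ≤ (e k).1 ∧ (e k).1 ≤ (e k).2 ∧
      (e k).2 ≤ je ∧ (e k).2 ≤ n := by
    intro k
    rcases Nat.eq_zero_or_pos k with rfl | hk0
    · rw [he0]
      have := hpR.1
      have h2 := dyckA_mono hp (Nat.zero_le (s - 1)) (show s - 1 < s by omega)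
      have := hpR.2.1
      have := hpRe.2.2
      constructor <;> [omega ; constructor <;> [omega; constructor <;>
        [omega; constructor <;> omega]]]
    · by_cases hks : k ≤ s
      · rw [show e k = p (k - 1) by simp [he, show k ≠ 0 by omega, hks]]
        have := hpb (k - 1) (by omega)
        omega
      · rw [show e k = (je, je) by simp [he, show k ≠ 0 by omega, hks]]
        have h2 := dyckA_mono hp (Nat.zero_le (s - 1)) (show s - 1 < s by omega)
        have := hpR.1
        have := hpR.2.1
        have := hpRe.2.2
        simp only []
        omega
  -- the min-formula second coordinate
  set J : ℕ → ℕ :=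
    fun d => Finset.inf' (Finset.range (s + 2)) (by simp) 
      (fun k => max (e k).2 (d - (e k).1)) with hJ
  have hJle : ∀ d, ∀ k < s + 2, J d ≤ max (e k).2 (d - (e k).1) := by
    intro d k hk
    exact Finset.inf'_le _ (Finset.mem_range.mpr hk)
  have hJge : ∀ d v, (∀ k < s + 2, v ≤ max (e k).2 (d - (e k).1)) → v ≤ J d := by
    intro d v h
    exact Finset.le_inf' _ _ (fun k hk => h k (Finset.mem_range.mp hk))
  have hJmin : ∀ d, ∃ k < s + 2, J d = max (e k).2 (d - (e k).1) := by
    intro d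
    obtain ⟨k, hk, hke⟩ := Finset.exists_mem_eq_inf' (s := Finset.range (s + 2))
      (by simp) (fun k => max (e k).2 (d - (e k).1))
    exact ⟨k, Finset.mem_range.mp hk, hke⟩
  -- F2 : d ≤ 2 * J d
  have hF2 : ∀ d, d ≤ 2 * J d := by
    intro d
    obtain ⟨k, hk, hke⟩ := hJmin d
    have := (heb k).2.2.1
    omega
  -- F3 : J d ≤ d - i0 for 2*i0 ≤ d
  have hF3 : ∀ d, 2 * i0 ≤ d → J d ≤ d - i0 := by
    intro d hd
    have := hJle d 0 (by omega)
    rw [he0] at this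
    simp only [] at this
    omega
  -- F4 : J d ≤ n for d ≤ 2*je
  have hF4 : ∀ d, d ≤ 2 * je → J d ≤ n := by
    intro d hd
    have := hJle d (s + 1) (by omega)
    rw [heS] at this
    simp only [] at this
    have := hpRe.2.2
    omega
  -- F5 : J (2*i0) = i0
  have hF5 : J (2 * i0) = i0 := by
    have h1 := hF3 (2 * i0) le_rfl
    have h2 : i0 ≤ J (2 * i0) := by
      apply hJge
      intro k hk
      have := (heb k).2.1
      have := (heb k).2.2.1
      omega
    omega
  -- F6 : J (2*je) = je
  have hF6 : J (2 * je) = je := by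
    have h1 := hJle (2 * je) (s + 1) (by omega)
    rw [heS] at h1
    simp only [] at h1
    have h2 : je ≤ J (2 * je) := by
      apply hJge
      intro k hk
      have := (heb k).2.2.1
      have := (heb k).2.2.2.1
      omega
    omega
  -- F7 : J at the diagonal of p k equals (p k).2
  have hF7 : ∀ k < s, J ((p k).1 + (p k).2) = (p k).2 := by
    intro k hk
    have h1 := hJle ((p k).1 + (p k).2) (k + 1) (by omega)
    rw [hep k hk] at h1
    have h2 : (p k).2 ≤ J ((p k).1 + (p k).2) := by
      apply hJge
      intro l hl
      by_cases hc : (p k).2 ≤ (e l).2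
      · omega
      · -- (e l).2 < (p k).2 ⇒ (e l).1 ≤ (p k).1
        have hle : (e l).1 ≤ (p k).1 := by
          rcases Nat.eq_zero_or_pos l with rfl | hl0
          · rw [he0]; exact (hpb k hk).1
          · by_cases hls : l ≤ s
            · rw [show e l = p (l - 1) by simp [he, show l ≠ 0 by omega, hls]] at hc ⊢
              rcases le_or_gt (l - 1) k with h | h
              · exact (dyckA_mono hp h hk).1
              · exact absurd (dyckA_mono hp (show k ≤ l - 1 by omega) (by omega)).2
                  (by omega)
            · rw [show e l = (je, je) by simp [he, show l ≠ 0 by omega, hls]] at hc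
              have := (hpb k hk).2.2.2.1
              simp only [] at hc
              omega
        omega
    omega
  -- F1 : steps of J
  have hF1 : ∀ d, J d ≤ J (d + 1) ∧ J (d + 1) ≤ J d + 1 := by
    intro d
    constructor
    · apply hJge
      intro k hk
      have := hJle d k hk
      omega
    · obtain ⟨k, hk, hke⟩ := hJmin d
      have := hJle (d + 1) k hk
      omega
  -- the full Dyck path
  set P : ℕ → ℕ × ℕ := fun t => (2 * i0 + t - J (2 * i0 + t), J (2 * i0 + t)) with hP
  set S : ℕ := 2 * (je - i0) + 1 with hS
  have hdle : ∀ t, t < S → 2 * i0 + t ≤ 2 * je := by intro t ht; omega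
  have hDyck : IsDyck n S P := by
    refine ⟨by omega, ?_, ?_, ?_, ?_⟩
    · intro t ht
      have h2 := hF2 (2 * i0 + t)
      have h3 := hF3 (2 * i0 + t) (by omega)
      have h4 := hF4 (2 * i0 + t) (hdle t ht)
      exact ⟨by simp only [hP]; omega, by simp only [hP]; omega, by simp only [hP]; omega⟩
    · simp only [hP, Nat.add_zero, hF5]
      omega
    · have harg : 2 * i0 + (S - 1) = 2 * je := by omega
      simp only [hP, harg, hF6]
      omega
    · intro t ht
      have harg : 2 * i0 + (t + 1) = (2 * i0 + t) + 1 := by ring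
      have h1 := hF1 (2 * i0 + t)
      have h3 := hF3 (2 * i0 + t) (by omega)
      rcases Nat.lt_or_ge (J (2 * i0 + t)) (J (2 * i0 + t + 1)) with hc | hc
      · right
        simp only [hP, harg]
        have : J (2 * i0 + t + 1) = J (2 * i0 + t) + 1 := by omega
        rw [this]
        simp only [Prod.mk.injEq]
        exact ⟨by omega, trivial⟩
      · left
        simp only [hP, harg]
        have : J (2 * i0 + t + 1) = J (2 * i0 + t) := by omega
        rw [this]
        simp only [Prod.mk.injEq]
        exact ⟨by omega, trivial⟩
  -- the inequality from the full polytope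
  have hfull := hxi S P hDyck
  have hP0 : (P 0).1 = i0 := by
    simp only [hP, Nat.add_zero, hF5]
    omega
  have hPe : (P (S - 1)).2 = je := by
    have harg : 2 * i0 + (S - 1) = 2 * je := by omega
    simp only [hP, harg, hF6]
  rw [hP0, hPe] at hfull
  refine le_trans ?_ hfull
  -- compare sums via the image of the diagonal map
  set g : ℕ → ℕ := fun k => (p k).1 + (p k).2 - 2 * i0 with hg
  have hPg : ∀ k < s, P (g k) = p k := by
    intro k hk
    have hb := hpb k hk
    have harg : 2 * i0 + g k = (p k).1 + (p k).2 := by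
      simp only [hg]
      omega
    simp only [hP, harg, hF7 k hk]
    have h2 : (p k).1 + (p k).2 - (p k).2 = (p k).1 := by omega
    rw [h2]
  have hginj : ∀ a ∈ Finset.range s, ∀ b ∈ Finset.range s, g a = g b → a = b := by
    intro a ha b hb hab
    simp only [Finset.mem_range] at ha hb
    by_contra hne
    rcases Nat.lt_or_ge a b with h | h
    · have := dyckA_diag_strict hp h hb
      have hba := (hpb a ha).1
      have := (hpb a ha).2.2.1
      simp only [hg] at hab
      omega
    · have hab' : b < a := by omega
      have := dyckA_diag_strict hp hab' ha
      have := (hpb b hb).1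
      have := (hpb b hb).2.2.1
      simp only [hg] at hab
      omega
  have himg : (Finset.range s).image g ⊆ Finset.range S := by
    intro t ht
    obtain ⟨k, hk, rfl⟩ := Finset.mem_image.mp ht
    have hk' := Finset.mem_range.mp hk
    have hb := hpb k hk'
    simp only [Finset.mem_range, hg, hS]
    omega
  calc ∑ k ∈ Finset.range s, x (p k)
      = ∑ k ∈ Finset.range s, x (P (g k)) := by
        refine Finset.sum_congr rfl fun k hk => ?_
        rw [hPg k (Finset.mem_range.mp hk)]
    _ = ∑ t ∈ (Finset.range s).image g, x (P t) := by
        rw [Finset.sum_image hginj]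
    _ ≤ ∑ t ∈ Finset.range S, x (P t) :=
        Finset.sum_le_sum_of_subset_of_nonneg himg (fun t _ _ => hx0 _)


lemma mem_Ppoly_of_PpolyA {n : ℕ} {m : ℕ → ℕ} {A : Set (ℕ × ℕ)} (hA : A ⊆ Rplus n)
    (htri : IsTriangularSet A) {x : ℕ × ℕ → ℝ} (hx : x ∈ PpolyA n m A) :
    x ∈ Ppoly n m := by
  obtain ⟨hx0, hxs, hxi⟩ := hx
  refine ⟨hx0, fun q hq => hxs q (fun hqA => hq (hA hqA)), ?_⟩
  intro s p hd
  have hpath : IsPath n s p := ⟨hd.2.1, hd.2.2.2.2⟩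
  exact (key m hA htri hx0 hxs hxi s p hpath hd.1).1 (p 0).1 le_rfl

lemma mem_PpolyA_of_Ppoly {n : ℕ} {m : ℕ → ℕ} {A : Set (ℕ × ℕ)} (hA : A ⊆ Rplus n)
    {x : ℕ × ℕ → ℝ} (hx : x ∈ Ppoly n m) (hsupp : ∀ q ∉ A, x q = 0) :
    x ∈ PpolyA n m A :=
  ⟨hx.1, hsupp, fun _ _ hd => dyckA_sum_le hA hx hd⟩

lemma SA_iff {n : ℕ} {m : ℕ → ℕ} {A : Set (ℕ × ℕ)} (hA : A ⊆ Rplus n)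
    (htri : IsTriangularSet A) {x : ℕ × ℕ → ℝ} :
    x ∈ SA n m A ↔ x ∈ Sfull n m ∧ ∀ q ∉ A, x q = 0 := by
  constructor
  · rintro ⟨hx, hint⟩
    exact ⟨⟨mem_Ppoly_of_PpolyA hA htri hx, hint⟩, hx.2.1⟩
  · rintro ⟨⟨hxP, hint⟩, hsupp⟩
    exact ⟨mem_PpolyA_of_Ppoly hA hxP hsupp, hint⟩

end FFLproof

open FFLproof in
/-- If `A` is triangular then `S_A(λ) + S_A(μ) = S_A(λ + μ)`; in particular `P_A(λ)`
is a normal lattice polytope (the lattice points of the `N`-th dilate are the `N`-fold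
Minkowski sums of lattice points). The known Minkowski property
`S(λ) + S(μ) = S(λ + μ)` of [FFoL11a] is assumed as a hypothesis. -/
theorem stmt11 (n : ℕ) (m₁ m₂ : ℕ → ℕ) (A : Set (ℕ × ℕ))
    (hA : A ⊆ Rplus n) (htri : IsTriangularSet A)
    (hMink : ∀ mA mB : ℕ → ℕ,
      {x | ∃ y ∈ Sfull n mA, ∃ z ∈ Sfull n mB, x = y + z} =
        Sfull n (fun t => mA t + mB t)) :
    {x | ∃ y ∈ SA n m₁ A, ∃ z ∈ SA n m₂ A, x = y + z} =
      SA n (fun t => m₁ t + m₂ t) A ∧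
    ∀ N : ℕ, 1 ≤ N →
      SA n (fun t => N * m₁ t) A =
        {x | ∃ f : ℕ → (ℕ × ℕ → ℝ), (∀ k < N, f k ∈ SA n m₁ A) ∧
          x = fun q => ∑ k ∈ Finset.range N, f k q} := by
  have minkA : ∀ mA mB : ℕ → ℕ,
      {x | ∃ y ∈ SA n mA A, ∃ z ∈ SA n mB A, x = y + z} =
        SA n (fun t => mA t + mB t) A := by
    intro mA mB
    ext x
    simp only [Set.mem_setOf_eq]
    constructor
    · rintro ⟨y, hy, z, hz, rfl⟩
      have hy' := (SA_iff hA htri).mp hy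
      have hz' := (SA_iff hA htri).mp hz
      have hmem : y + z ∈ Sfull n (fun t => mA t + mB t) := by
        rw [← hMink mA mB]
        exact ⟨y, hy'.1, z, hz'.1, rfl⟩
      refine (SA_iff hA htri).mpr ⟨hmem, ?_⟩
      intro q hq
      have h1 := hy'.2 q hq
      have h2 := hz'.2 q hq
      show y q + z q = 0
      rw [h1, h2, add_zero]
    · intro hx
      have hx' := (SA_iff hA htri).mp hx
      have hmem : x ∈ {x | ∃ y ∈ Sfull n mA, ∃ z ∈ Sfull n mB, x = y + z} := by
        rw [hMink mA mB]
        exact hx'.1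
      obtain ⟨y, hy, z, hz, rfl⟩ := hmem
      have hzero : ∀ q ∉ A, y q = 0 ∧ z q = 0 := by
        intro q hq
        have h0 : y q + z q = 0 := hx'.2 q hq
        have hy0 := hy.1.1 q
        have hz0 := hz.1.1 q
        constructor <;> linarith
      exact ⟨y, (SA_iff hA htri).mpr ⟨hy, fun q hq => (hzero q hq).1⟩,
        z, (SA_iff hA htri).mpr ⟨hz, fun q hq => (hzero q hq).2⟩, rfl⟩
  refine ⟨minkA m₁ m₂, ?_⟩
  intro N hN
  induction N, hN using Nat.le_induction with
  | base =>
    have h1 : (fun t => 1 * m₁ t) = m₁ := funext fun t => one_mul _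
    rw [h1]
    ext x
    simp only [Set.mem_setOf_eq]
    constructor
    · intro hx
      exact ⟨fun _ => x, fun k _ => hx, by funext q; rw [Finset.sum_range_one]⟩
    · rintro ⟨f, hf, rfl⟩
      have he : (fun q => ∑ k ∈ Finset.range 1, f k q) = f 0 := by
        funext q; rw [Finset.sum_range_one]
      rw [he]
      exact hf 0 (by omega)
  | succ N hN ih =>
    have he : (fun t => (N + 1) * m₁ t) = (fun t => N * m₁ t + m₁ t) :=
      funext fun t => by ring
    have hmk : {x | ∃ y ∈ SA n (fun t => N * m₁ t) A, ∃ z ∈ SA n m₁ A, x = y + z} =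
        SA n (fun t => N * m₁ t + m₁ t) A := minkA (fun t => N * m₁ t) m₁
    rw [he, ← hmk, ih]
    ext x
    simp only [Set.mem_setOf_eq]
    constructor
    · rintro ⟨y, ⟨f, hf, rfl⟩, z, hz, rfl⟩
      refine ⟨fun k => if k < N then f k else z, fun k hk => ?_, ?_⟩
      · by_cases h : k < N
        · simp only [if_pos h]; exact hf k h
        · simp only [if_neg h]; exact hz
      · funext q
        simp only [Pi.add_apply]
        rw [Finset.sum_range_succ, if_neg (lt_irrefl N)]
        congr 1
        exact Finset.sum_congr rfl fun k hk => by
          rw [if_pos (Finset.mem_range.mp hk)]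
    · rintro ⟨f, hf, rfl⟩
      refine ⟨fun q => ∑ k ∈ Finset.range N, f k q,
        ⟨f, fun k hk => hf k (by omega), rfl⟩, f N, hf N (by omega), ?_⟩
      funext q
      simp only [Pi.add_apply]
      rw [Finset.sum_range_succ]
end

section
/- Let A ⊆ R^+ be triangular and s ∈ P_A(λ) a lattice point of the face polytope. Then for every Dyck path p of R^+ (for the full root system), the extension-by-zero t of s satisfies Σ_{α∈p} t_α ≤ λ(h_{β_p}). -/
lemma lamSum_nonneg (m : ℕ → ℕ) (a b : ℕ) : 0 ≤ lamSum m a b :=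
  Finset.sum_nonneg fun t _ => by positivity

lemma lamSum_mono (m : ℕ → ℕ) {a b a' b' : ℕ} (ha : a' ≤ a) (hb : b ≤ b') :
    lamSum m a b ≤ lamSum m a' b' :=
  Finset.sum_le_sum_of_subset_of_nonneg (Finset.Icc_subset_Icc ha hb)
    (fun t _ _ => by positivity)

lemma lamSum_add_le (m : ℕ → ℕ) {a j1 i2 b : ℕ} (h : j1 < i2) (h2 : a ≤ i2) (h3 : j1 ≤ b) :
    lamSum m a j1 + lamSum m i2 b ≤ lamSum m a b := by
  have hdis : Disjoint (Finset.Icc a j1) (Finset.Icc i2 b) := by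
    apply Finset.disjoint_left.mpr
    intro t ht ht'
    simp only [Finset.mem_Icc] at ht ht'
    omega
  unfold lamSum
  rw [← Finset.sum_union hdis]
  apply Finset.sum_le_sum_of_subset_of_nonneg
  · apply Finset.union_subset
    · exact Finset.Icc_subset_Icc le_rfl h3
    · exact Finset.Icc_subset_Icc h2 le_rfl
  · intro t _ _; positivity

lemma path_mono {s : ℕ} {p : ℕ → ℕ × ℕ}
    (hstep : ∀ k, k + 1 < s →
      (p (k + 1) = ((p k).1 + 1, (p k).2) ∨ p (k + 1) = ((p k).1, (p k).2 + 1))) :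
    ∀ k l, k ≤ l → l < s →
      (p k).1 ≤ (p l).1 ∧ (p k).2 ≤ (p l).2 ∧
      (p k).1 + (p k).2 + (l - k) = (p l).1 + (p l).2 := by
  intro k
  refine Nat.le_induction ?_ ?_
  · intro _; omega
  · intro l hkl IH hls
    have hl : l < s := by omega
    obtain ⟨h1, h2, h3⟩ := IH hl
    rcases hstep l hls with h | h <;> rw [h] <;> simp <;> omega

lemma key (m : ℕ → ℕ) (A : Set (ℕ × ℕ)) (htri : IsTriangularSet A)
    (x : ℕ × ℕ → ℝ) (hnn : ∀ q, 0 ≤ x q) (hsupp : ∀ q, q ∉ A → x q = 0)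
    (hineq : ∀ (s : ℕ) (p : ℕ → ℕ × ℕ), IsDyckA A s p →
      ∑ k ∈ Finset.range s, x (p k) ≤ lamSum m (p 0).1 (p (s - 1)).2) :
    ∀ (s : ℕ) (p : ℕ → ℕ × ℕ), (∀ k, k + 1 < s →
      (p (k + 1) = ((p k).1 + 1, (p k).2) ∨ p (k + 1) = ((p k).1, (p k).2 + 1))) →
      ∑ k ∈ Finset.range s, x (p k) ≤ lamSum m (p 0).1 (p (s - 1)).2 := by
  intro s
  induction s using Nat.strong_induction_on with
  | _ s IH =>
  intro p hstep
  classical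
  rcases Nat.eq_zero_or_pos s with hs0 | hs1
  · subst hs0; simpa using lamSum_nonneg m (p 0).1 (p (0 - 1)).2
  have hmono := path_mono hstep
  by_cases hbr : ∃ a b, a < b ∧ b < s ∧ p a ∈ A ∧ p b ∈ A ∧
      (∀ k, a < k → k < b → p k ∉ A) ∧ (p a).2 + 1 < (p b).1
  · -- break case: split the path
    obtain ⟨a, b, hab, hbs, hpaA, hpbA, hmid, hgap⟩ := hbr
    have h1 := IH (a + 1) (by omega) p (fun k hk => hstep k (by omega))
    have h2 := IH (s - b) (by omega) (fun k => p (b + k))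
      (fun k hk => hstep (b + k) (by omega))
    simp only [Nat.add_sub_cancel] at h1
    have hb0 : b + 0 = b := rfl
    have hbe : b + (s - b - 1) = s - 1 := by omega
    simp only [hb0, hbe] at h2
    have hsplit : ∑ k ∈ Finset.range s, x (p k) =
        (∑ k ∈ Finset.range (a + 1), x (p k)) + (∑ k ∈ Finset.Ico (a + 1) b, x (p k))
          + ∑ k ∈ Finset.Ico b s, x (p k) := by
      rw [Finset.range_eq_Ico, ← Finset.sum_Ico_consecutive _ (by omega : (0:ℕ) ≤ b) (by omega : b ≤ s),
        ← Finset.sum_Ico_consecutive _ (by omega : (0:ℕ) ≤ a + 1) (by omega : a + 1 ≤ b),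
        ← Finset.range_eq_Ico]
    have hmid0 : ∑ k ∈ Finset.Ico (a + 1) b, x (p k) = 0 :=
      Finset.sum_eq_zero fun k hk => by
        simp only [Finset.mem_Ico] at hk
        exact hsupp _ (hmid k (by omega) hk.2)
    have htail : ∑ k ∈ Finset.Ico b s, x (p k) = ∑ k ∈ Finset.range (s - b), x (p (b + k)) := by
      rw [Finset.sum_Ico_eq_sum_range]
    rw [hsplit, hmid0, htail]
    have hfin := lamSum_add_le m (a := (p 0).1) (j1 := (p a).2) (i2 := (p b).1) (b := (p (s-1)).2)
      (by omega) ((hmono 0 b (by omega) hbs).1) ((hmono a (s-1) (by omega) (by omega)).2.1)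
    linarith
  · -- no-break case
    push_neg at hbr
    set S : Finset ℕ := (Finset.range s).filter (fun k => p k ∈ A) with hS
    rcases Nat.eq_zero_or_pos S.card with hr0 | hrpos
    · have : ∑ k ∈ Finset.range s, x (p k) = 0 := by
        apply Finset.sum_eq_zero
        intro k hk
        apply hsupp
        intro hkA
        have : k ∈ S := Finset.mem_filter.mpr ⟨hk, hkA⟩
        rw [Finset.card_eq_zero.mp hr0] at this
        simp at this
      rw [this]; exact lamSum_nonneg _ _ _
    set r := S.card with hr
    set e : Fin r ↪o ℕ := S.orderEmbOfFin rfl with he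
    have hemem : ∀ t : Fin r, e t ∈ S := fun t => S.orderEmbOfFin_mem rfl t
    have heS : ∀ t : Fin r, e t < s ∧ p (e t) ∈ A := by
      intro t
      have := Finset.mem_filter.mp (hemem t)
      exact ⟨Finset.mem_range.mp this.1, this.2⟩
    have hesurj : ∀ k ∈ S, ∃ t : Fin r, e t = k := by
      intro k hk
      have : (k : ℕ) ∈ Set.range e := by
        rw [Finset.range_orderEmbOfFin]; exact_mod_cast hk
      exact this
    set q : ℕ → ℕ × ℕ := fun t => if h : t < r then p (e ⟨t, h⟩) else p (e ⟨0, hrpos⟩) with hq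
    have hqdef : ∀ t (ht : t < r), q t = p (e ⟨t, ht⟩) := by
      intro t ht
      simp only [hq]
      exact dif_pos ht
    -- connectivity of consecutive elements
    have hconn : ∀ t, t + 1 < r → (q (t + 1)).1 ≤ (q t).2 + 1 := by
      intro t ht
      rw [hqdef t (by omega), hqdef (t + 1) ht]
      set a := e ⟨t, by omega⟩
      set b := e ⟨t + 1, ht⟩
      have hab : a < b := e.strictMono (by simp [Fin.lt_def])
      by_contra hcon
      refine absurd (hbr a b hab (heS ⟨t+1, ht⟩).1 (heS ⟨t, by omega⟩).2 (heS ⟨t+1, ht⟩).2 ?_) (by omega)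
      intro k hk1 hk2 hkA
      obtain ⟨u, hu⟩ := hesurj k (Finset.mem_filter.mpr ⟨Finset.mem_range.mpr (by
        have := (heS ⟨t+1, ht⟩).1; omega), hkA⟩)
      have h1 : (⟨t, by omega⟩ : Fin r) < u := e.strictMono.lt_iff_lt.mp (by rw [hu]; exact hk1)
      have h2 : u < (⟨t + 1, ht⟩ : Fin r) := e.strictMono.lt_iff_lt.mp (by rw [hu]; exact hk2)
      simp [Fin.lt_def] at h1 h2
      omega
    have hqmono : ∀ t u, t ≤ u → u < r → (q t).1 ≤ (q u).1 ∧ (q t).2 ≤ (q u).2 := by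
      intro t u htu hu
      rw [hqdef t (by omega), hqdef u hu]
      have hle : (e ⟨t, by omega⟩ : ℕ) ≤ e ⟨u, hu⟩ := e.monotone (by simp [Fin.le_def]; omega)
      have := hmono (e ⟨t, by omega⟩) (e ⟨u, hu⟩) hle (heS ⟨u, hu⟩).1
      exact ⟨this.1, this.2.1⟩
    have hqA : ∀ t < r, q t ∈ A := by
      intro t ht
      rw [hqdef t ht]; exact (heS ⟨t, ht⟩).2
    have hdyck : IsDyckA A r q := by
      refine ⟨hrpos, hqA, ?_, ?_⟩
      · intro t ht
        obtain ⟨hm1, hm2⟩ := hqmono t (t + 1) (by omega) ht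
        refine ⟨hm1, hm2, ?_, hconn t ht⟩
        rw [hqdef t (by omega), hqdef (t + 1) ht]
        intro hcon
        have hab : (e ⟨t, by omega⟩ : ℕ) < e ⟨t + 1, ht⟩ := e.strictMono (by simp [Fin.lt_def])
        have := hmono (e ⟨t, by omega⟩) (e ⟨t + 1, ht⟩) (le_of_lt hab) (heS ⟨t + 1, ht⟩).1
        have e1 : (p (e ⟨t, by omega⟩)).1 = (p (e ⟨t + 1, ht⟩)).1 := congrArg Prod.fst hcon
        have e2 : (p (e ⟨t, by omega⟩)).2 = (p (e ⟨t + 1, ht⟩)).2 := congrArg Prod.snd hcon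
        omega
      · intro t ht u hu hle
        rcases le_or_gt t u with htu | hut
        · -- chain using triangularity
          have chain : ∀ v, t ≤ v → v < r → ((q t).1, (q v).2) ∈ A := by
            refine Nat.le_induction ?_ ?_
            · intro hv
              have := hqA t ht
              simpa using this
            · intro v htv IHv hv1
              have hprev := IHv (by omega)
              have hnext : q (v + 1) ∈ A := hqA (v + 1) hv1
              have hnext' : ((q (v+1)).1, (q (v+1)).2) ∈ A := by simpa using hnext
              have h1 : (q t).1 ≤ (q (v + 1)).1 := (hqmono t (v + 1) (by omega) hv1).1
              have h2 : (q v).2 ≤ (q (v + 1)).2 := (hqmono v (v + 1) (by omega) hv1).2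
              exact (htri (q t).1 (q v).2 (q (v+1)).1 (q (v+1)).2 hprev hnext' h1 h2
                (hconn v hv1)).1
          exact chain u htu hu
        · -- u < t : direct triangularity
          have hu' : ((q u).1, (q u).2) ∈ A := by simpa using hqA u hu
          have ht' : ((q t).1, (q t).2) ∈ A := by simpa using hqA t ht
          obtain ⟨hm1, hm2⟩ := hqmono u t (le_of_lt hut) ht
          exact (htri (q u).1 (q u).2 (q t).1 (q t).2 hu' ht' hm1 hm2 (by omega)).2 hle
    have hbound := hineq r q hdyck
    -- rewrite the sum over range s as sum over q
    have hsum : ∑ k ∈ Finset.range s, x (p k) = ∑ t ∈ Finset.range r, x (q t) := by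
      have hsub : S ⊆ Finset.range s := Finset.filter_subset _ _
      rw [← Finset.sum_subset hsub (fun k hk hknot => hsupp _ (fun hkA =>
        hknot (Finset.mem_filter.mpr ⟨hk, hkA⟩)))]
      have himg : Finset.image (fun t : Fin r => (e t : ℕ)) Finset.univ = S := by
        apply Finset.coe_injective
        push_cast [Finset.coe_image, Finset.coe_univ, Set.image_univ]
        exact Finset.range_orderEmbOfFin S rfl
      rw [← himg, Finset.sum_image (by intro a _ b _ hab; exact e.injective (by exact_mod_cast hab))]
      rw [← Fin.sum_univ_eq_sum_range]
      apply Finset.sum_congr rfl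
      intro t _
      rw [hqdef t t.2]
    rw [hsum]
    refine le_trans hbound (lamSum_mono m ?_ ?_)
    · rw [hqdef 0 hrpos]
      exact (hmono 0 (e ⟨0, hrpos⟩) (by omega) (heS _).1).1
    · rw [hqdef (r - 1) (by omega)]
      exact (hmono (e ⟨r - 1, by omega⟩) (s - 1) (by have := (heS ⟨r-1, by omega⟩).1; omega)
        (by omega)).2.1

/-- Let `A ⊆ R^+` be triangular and `x` a lattice point of `P_A(λ)` (extended by zero
outside `A`). Then for every Dyck path `p` of the full root system `R^+`,
`Σ_{α ∈ p} x_α ≤ λ(h_{β_p})`. -/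
theorem stmt16 (n : ℕ) (m : ℕ → ℕ) (A : Set (ℕ × ℕ))
    (hA : A ⊆ Rplus n) (htri : IsTriangularSet A)
    (x : ℕ × ℕ → ℝ) (hx : x ∈ SA n m A) :
    ∀ s p, IsDyck n s p →
      ∑ k ∈ Finset.range s, x (p k) ≤ lamSum m (p 0).1 (p (s - 1)).2 := by
  intro s p hd
  exact key m A htri x hx.1.1 hx.1.2.1 hx.1.2.2 s p hd.2.2.2.2
end

section
/- Suppose w ∈ S_{n+1} admits a factorization w = w_1 ⋯ w_n with w_i = s_{ℓ_i} ⋯ s_i (nontrivial) and ℓ_1 ≤ ℓ_2 ≤ ⋯ ≤ ℓ_n ≤ n. Then the complement set S = ⋃_{i=1}^{n}{ α_{k, i+j} : 1 ≤ k ≤ i, 0 ≤ j ≤ ℓ_{i+1} − ℓ_i − 1 } (ℓ_{n+1} := n) has the property that R^+ \ S is a triangular subset of positive roots. -/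
/-- The segment `s_ℓ s_{ℓ−1} ⋯ s_i`, `s_t = (t, t+1)`. -/
def seg (i ℓ : ℕ) : Equiv.Perm ℕ :=
  (((List.range' i (ℓ + 1 - i)).reverse).map fun t => Equiv.swap t (t + 1)).prod

/-- `S = ⋃_{i=1}^{n} { α_{k, i+j} : 1 ≤ k ≤ i, 0 ≤ j ≤ ℓ_{i+1} − ℓ_i − 1 }`. -/
def Sset (n : ℕ) (ℓ : ℕ → ℕ) : Set (ℕ × ℕ) :=
  {p | ∃ i j : ℕ, 1 ≤ i ∧ i ≤ n ∧ 1 ≤ p.1 ∧ p.1 ≤ i ∧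
    j + ℓ i + 1 ≤ ℓ (i + 1) ∧ p.2 = i + j}

/-- If `w = w₁ ⋯ w_n` with `w_i = s_{ℓ_i} ⋯ s_i` nontrivial and
`ℓ_1 ≤ ⋯ ≤ ℓ_n ≤ n` (with `ℓ_{n+1} := n`), then `R^+ ∖ S` is a triangular subset. -/
theorem stmt17 (n : ℕ) (ℓ : ℕ → ℕ) (w : Equiv.Perm ℕ)
    (hℓ : ∀ i, 1 ≤ i → i ≤ n → i ≤ ℓ i ∧ ℓ i ≤ n)
    (hmono : ∀ i, 1 ≤ i → i < n → ℓ i ≤ ℓ (i + 1))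
    (htop : ℓ (n + 1) = n)
    (hw : w = ((List.range' 1 n).map fun i => seg i (ℓ i)).prod) :
    IsTriangularSet (Rplus n \ Sset n ℓ) := by
  intro i₁ j₁ i₂ j₂ h1 h2 hi hj hij
  obtain ⟨⟨hr1a, hr1b, hr1c⟩, hs1⟩ := h1
  obtain ⟨⟨hr2a, hr2b, hr2c⟩, hs2⟩ := h2
  refine ⟨⟨⟨hr1a, le_trans hr1b hj, hr2c⟩, ?_⟩, fun h => ⟨⟨hr2a, h, hr1c⟩, ?_⟩⟩
  · rintro ⟨i, j, hi1, hin, hk1, hki, hjl, hm⟩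
    simp only at hki hm
    by_cases hij1 : i ≤ j₁
    · exact hs1 ⟨i, j₁ - i, hi1, hin, hr1a, hki, by omega, by omega⟩
    · exact hs2 ⟨i, j, hi1, hin, hr2a, by omega, hjl, hm⟩
  · rintro ⟨i, j, hi1, hin, hk1, hki, hjl, hm⟩
    simp only at hki hm
    exact hs1 ⟨i, j, hi1, hin, hr1a, by omega, hjl, hm⟩
end
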